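/- arXiv:0908.3765 — 5 statements merged into one kernel-verified Lean document; each statement's English description precedes it below -/
import Mathlib

section
/- Let E be a real normed vector space, let x_0, …, x_n ∈ E, and let σ be a permutation of {0,1,…,n}. For 0 ≤ j ≤ n let b_j = (1/(j+1))(x_{σ(0)} + x_{σ(1)} + … + x_{σ(j)}) be the barycenter of the first j+1 permuted vertices. Then for all 0 ≤ j, l ≤ n one has ‖b_j − b_l‖ ≤ (n/(n+1)) · max_{0 ≤ i,k ≤ n} ‖x_i − x_k‖. (In particular every simplex of the barycentric subdivision of Δ[x_0,…,x_n] has diameter at most n/(n+1) times the diameter of Δ[x_0,…,x_n].) -/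
/-- The vertices of any simplex of the barycentric subdivision of `Δ[x₀,…,xₙ]` are the
successive barycenters `bⱼ = (1/(j+1))(x_{σ(0)} + … + x_{σ(j)})` for a permutation `σ`;
any two of them are at distance at most `n/(n+1)` times the diameter
`max_{i,k} ‖xᵢ - x_k‖` of the original simplex. -/
theorem barycentric_subdivision_diam_le
    {E : Type*} [NormedAddCommGroup E] [NormedSpace ℝ E]
    (n : ℕ) (x : Fin (n + 1) → E) (σ : Equiv.Perm (Fin (n + 1)))
    (b : Fin (n + 1) → E)
    (hb : ∀ j, b j = (((j : ℕ) : ℝ) + 1)⁻¹ •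
      ∑ i ∈ Finset.univ.filter (fun i => i ≤ j), x (σ i)) :
    ∀ j l, ‖b j - b l‖ ≤
      ((n : ℝ) / (n + 1)) *
        (Finset.univ : Finset (Fin (n + 1) × Fin (n + 1))).sup' Finset.univ_nonempty
          (fun p => ‖x p.1 - x p.2‖) := by
  classical
  set D := (Finset.univ : Finset (Fin (n + 1) × Fin (n + 1))).sup' Finset.univ_nonempty
      (fun p => ‖x p.1 - x p.2‖) with hD
  have hDle : ∀ i k, ‖x i - x k‖ ≤ D := fun i k =>
    Finset.le_sup' (f := fun p => ‖x p.1 - x p.2‖) (Finset.mem_univ (i, k))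
  have hD0 : 0 ≤ D := le_trans (norm_nonneg _) (hDle 0 0)
  have hfilter : ∀ m : Fin (n+1),
      Finset.univ.filter (fun i : Fin (n+1) => i ≤ m) = Finset.Iic m := by
    intro m; ext i; simp
  have hcard : ∀ m : Fin (n+1), (Finset.Iic m).card = (m : ℕ) + 1 := by
    intro m; simp [Fin.card_Iic]
  have hpos : ∀ m : Fin (n+1), (0 : ℝ) < ((m : ℕ) : ℝ) + 1 := by
    intro m; positivity
  -- rewrite b m - x(σ i)
  have hdiff : ∀ (m i : Fin (n+1)),
      b m - x (σ i) = (((m : ℕ) : ℝ) + 1)⁻¹ • ∑ k ∈ Finset.Iic m, (x (σ k) - x (σ i)) := by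
    intro m i
    rw [hb m, hfilter m, Finset.sum_sub_distrib, Finset.sum_const, hcard m, smul_sub]
    congr 1
    rw [← Nat.cast_smul_eq_nsmul ℝ, smul_smul]
    push_cast
    rw [inv_mul_cancel₀ (ne_of_gt (hpos m)), one_smul]
  -- pointwise bound, case i ≤ m
  have key₁ : ∀ (m i : Fin (n+1)), i ≤ m →
      ‖b m - x (σ i)‖ ≤ ((m : ℕ) : ℝ) / (((m : ℕ) : ℝ) + 1) * D := by
    intro m i him
    rw [hdiff m i, norm_smul, norm_inv, Real.norm_of_nonneg (le_of_lt (hpos m))]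
    rw [div_eq_inv_mul, mul_assoc]
    refine mul_le_mul_of_nonneg_left ?_ (inv_nonneg.2 (le_of_lt (hpos m)))
    calc ‖∑ k ∈ Finset.Iic m, (x (σ k) - x (σ i))‖
        ≤ ∑ k ∈ Finset.Iic m, ‖x (σ k) - x (σ i)‖ := norm_sum_le _ _
      _ = ∑ k ∈ Finset.Iic m \ {i}, ‖x (σ k) - x (σ i)‖ := by
          rw [Finset.sum_eq_sum_sdiff_singleton_add (Finset.mem_Iic.2 him)
            (fun k => ‖x (σ k) - x (σ i)‖)]
          simp
      _ ≤ ∑ _k ∈ Finset.Iic m \ {i}, D := Finset.sum_le_sum (fun k _ => hDle _ _)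
      _ = ((m : ℕ) : ℝ) * D := by
          rw [Finset.sum_const, Finset.card_sdiff_of_subset (by simpa using him), hcard m]
          simp [nsmul_eq_mul]
  -- pointwise bound, general
  have key₂ : ∀ (m i : Fin (n+1)), ‖b m - x (σ i)‖ ≤ D := by
    intro m i
    rw [hdiff m i, norm_smul, norm_inv, Real.norm_of_nonneg (le_of_lt (hpos m))]
    rw [inv_mul_le_iff₀ (hpos m)]
    calc ‖∑ k ∈ Finset.Iic m, (x (σ k) - x (σ i))‖
        ≤ ∑ k ∈ Finset.Iic m, ‖x (σ k) - x (σ i)‖ := norm_sum_le _ _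
      _ ≤ ∑ _k ∈ Finset.Iic m, D := Finset.sum_le_sum (fun k _ => hDle _ _)
      _ = ((m : ℕ) + 1 : ℝ) * D := by
          rw [Finset.sum_const, hcard m, nsmul_eq_mul]; push_cast; ring
  -- main estimate for j ≤ l
  have main : ∀ j l : Fin (n+1), j ≤ l → ‖b j - b l‖ ≤ ((n : ℝ) / (n + 1)) * D := by
    intro j l hjl
    have hsplit : b j - b l = (((l : ℕ) : ℝ) + 1)⁻¹ • ∑ i ∈ Finset.Iic l, (b j - x (σ i)) := by
      rw [hb l, hfilter l]
      have : ∑ i ∈ Finset.Iic l, (b j - x (σ i))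
          = ((l : ℕ) + 1) • b j - ∑ i ∈ Finset.Iic l, x (σ i) := by
        rw [Finset.sum_sub_distrib, Finset.sum_const, hcard l]
      rw [this, smul_sub, ← Nat.cast_smul_eq_nsmul ℝ, smul_smul]
      push_cast
      rw [inv_mul_cancel₀ (ne_of_gt (hpos l)), one_smul]
    rw [hsplit, norm_smul, norm_inv, Real.norm_of_nonneg (le_of_lt (hpos l))]
    have hsum : ‖∑ i ∈ Finset.Iic l, (b j - x (σ i))‖ ≤ ((l : ℕ) : ℝ) * D := by
      calc ‖∑ i ∈ Finset.Iic l, (b j - x (σ i))‖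
          ≤ ∑ i ∈ Finset.Iic l, ‖b j - x (σ i)‖ := norm_sum_le _ _
        _ ≤ ∑ i ∈ Finset.Iic l,
              (if i ≤ j then ((j : ℕ) : ℝ) / (((j : ℕ) : ℝ) + 1) * D else D) := by
            refine Finset.sum_le_sum (fun i _ => ?_)
            by_cases h : i ≤ j
            · simpa [h] using key₁ j i h
            · simpa [h] using key₂ j i
        _ = ((j : ℕ) : ℝ) * D + (((l : ℕ) : ℝ) - ((j : ℕ) : ℝ)) * D := by
            rw [Finset.sum_ite, Finset.sum_const, Finset.sum_const]
            have h1 : (Finset.Iic l).filter (fun i => i ≤ j) = Finset.Iic j := by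
              ext i
              simp only [Finset.mem_filter, Finset.mem_Iic]
              exact ⟨fun h => h.2, fun h => ⟨h.trans hjl, h⟩⟩
            have h2 : ((Finset.Iic l).filter (fun i => ¬ i ≤ j)).card
                = (l : ℕ) - (j : ℕ) := by
              have := Finset.card_filter_add_card_filter_not
                (s := Finset.Iic l) (p := fun i => i ≤ j)
              rw [h1, hcard j, hcard l] at this
              omega
            rw [h1, hcard j, h2]
            have hjl' : (j : ℕ) ≤ (l : ℕ) := hjl
            simp only [nsmul_eq_mul, Nat.cast_sub hjl']
            push_cast
            field_simp
        _ = ((l : ℕ) : ℝ) * D := by ring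
    calc (((l : ℕ) : ℝ) + 1)⁻¹ * ‖∑ i ∈ Finset.Iic l, (b j - x (σ i))‖
        ≤ (((l : ℕ) : ℝ) + 1)⁻¹ * (((l : ℕ) : ℝ) * D) :=
          mul_le_mul_of_nonneg_left hsum (inv_nonneg.2 (le_of_lt (hpos l)))
      _ = ((l : ℕ) : ℝ) / (((l : ℕ) : ℝ) + 1) * D := by ring
      _ ≤ ((n : ℝ) / (n + 1)) * D := by
          refine mul_le_mul_of_nonneg_right ?_ hD0
          have hln : ((l : ℕ) : ℝ) ≤ (n : ℝ) := by
            exact_mod_cast Nat.le_of_lt_succ l.isLt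
          rw [div_le_div_iff₀ (hpos l) (by positivity)]
          nlinarith
  intro j l
  rcases le_total j l with h | h
  · exact main j l h
  · rw [norm_sub_rev]; exact main l j h
end

section
/- Let X_0, X_1, …, X_n be invertible N×N complex matrices and let s_1, …, s_{n−1} be real numbers with s_j ≥ 0 and Σ_j s_j ≤ 1. Let A = ((X_n*)⁻¹X_0*X_0X_n⁻¹ − I) + Σ_{j=1}^{n−1} s_j ((X_n*)⁻¹X_j*X_jX_n⁻¹ − (X_n*)⁻¹X_0*X_0X_n⁻¹). Then ‖A‖ ≤ ‖X_n⁻¹‖² · max_{1 ≤ i ≤ n} ‖X_i − X_0‖ · ( ‖X_n‖ + max_{1 ≤ j ≤ n−1} ‖X_j‖ + 2‖X_0‖ ), where ‖·‖ is the spectral norm. -/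
open Matrix
open scoped Matrix.Norms.L2Operator
set_option maxHeartbeats 1000000

lemma aux_conj_sq {N : ℕ} (Y Z : Matrix (Fin N) (Fin N) ℂ) :
    ‖Yᴴ * Y - Zᴴ * Z‖ ≤ ‖Y - Z‖ * (‖Y‖ + ‖Z‖) := by
  have h : Yᴴ * Y - Zᴴ * Z = Yᴴ * (Y - Z) + (Y - Z)ᴴ * Z := by
    simp [mul_sub, sub_mul, conjTranspose_sub]
  rw [h]
  calc ‖Yᴴ * (Y - Z) + (Y - Z)ᴴ * Z‖ ≤ ‖Yᴴ * (Y - Z)‖ + ‖(Y - Z)ᴴ * Z‖ := norm_add_le _ _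
    _ ≤ ‖Yᴴ‖ * ‖Y - Z‖ + ‖(Y - Z)ᴴ‖ * ‖Z‖ := add_le_add (norm_mul_le _ _) (norm_mul_le _ _)
    _ = ‖Y - Z‖ * (‖Y‖ + ‖Z‖) := by
        rw [Matrix.l2_opNorm_conjTranspose, Matrix.l2_opNorm_conjTranspose]; ring

lemma aux_sandwich {N : ℕ} (M C : Matrix (Fin N) (Fin N) ℂ) :
    ‖Mᴴ * C * M‖ ≤ ‖M‖ ^ 2 * ‖C‖ := by
  calc ‖Mᴴ * C * M‖ ≤ ‖Mᴴ * C‖ * ‖M‖ := norm_mul_le _ _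
    _ ≤ ‖Mᴴ‖ * ‖C‖ * ‖M‖ :=
        mul_le_mul_of_nonneg_right (norm_mul_le _ _) (norm_nonneg _)
    _ = ‖M‖ ^ 2 * ‖C‖ := by rw [Matrix.l2_opNorm_conjTranspose]; ring

/-- For invertible complex matrices `X₀, …, Xₙ` and reals `s₁, …, s_{n-1}` with
`sⱼ ≥ 0`, `∑ sⱼ ≤ 1`, the associated matrix
`A = ((Xₙᴴ)⁻¹X₀ᴴX₀Xₙ⁻¹ - I) + ∑_{j=1}^{n-1} sⱼ((Xₙᴴ)⁻¹XⱼᴴXⱼXₙ⁻¹ - (Xₙᴴ)⁻¹X₀ᴴX₀Xₙ⁻¹)`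
satisfies, in the spectral norm,
`‖A‖ ≤ ‖Xₙ⁻¹‖² · max_{1≤i≤n} ‖Xᵢ - X₀‖ · (‖Xₙ‖ + max_{1≤j≤n-1} ‖Xⱼ‖ + 2‖X₀‖)`. -/
theorem norm_A_le_bound
    (N n : ℕ) (hn : 2 ≤ n) (X : ℕ → Matrix (Fin N) (Fin N) ℂ)
    (hX : ∀ i ≤ n, IsUnit (X i).det)
    (s : ℕ → ℝ) (hs : ∀ j ∈ Finset.Ico 1 n, 0 ≤ s j)
    (hssum : ∑ j ∈ Finset.Ico 1 n, s j ≤ 1)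
    (A : Matrix (Fin N) (Fin N) ℂ)
    (hA : A = ((X n)ᴴ⁻¹ * (X 0)ᴴ * X 0 * (X n)⁻¹ - 1) +
      ∑ j ∈ Finset.Ico 1 n, s j •
        ((X n)ᴴ⁻¹ * (X j)ᴴ * X j * (X n)⁻¹ - (X n)ᴴ⁻¹ * (X 0)ᴴ * X 0 * (X n)⁻¹)) :
    ‖A‖ ≤ ‖(X n)⁻¹‖ ^ 2 *
      ((Finset.Icc 1 n).sup' (Finset.nonempty_Icc.mpr (by omega))
        (fun i => ‖X i - X 0‖)) *
      (‖X n‖ +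
        (Finset.Icc 1 (n - 1)).sup' (Finset.nonempty_Icc.mpr (by omega))
          (fun j => ‖X j‖) +
        2 * ‖X 0‖) := by
  have hdet : IsUnit (X n).det := hX n le_rfl
  set M := (X n)⁻¹ with hM
  have hconj : (X n)ᴴ⁻¹ = Mᴴ := (Matrix.conjTranspose_nonsing_inv (X n)).symm
  set D := (Finset.Icc 1 n).sup' (Finset.nonempty_Icc.mpr (by omega))
      (fun i => ‖X i - X 0‖) with hD
  set S := (Finset.Icc 1 (n - 1)).sup' (Finset.nonempty_Icc.mpr (by omega))
      (fun j => ‖X j‖) with hS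
  have hDle : ∀ i ∈ Finset.Icc 1 n, ‖X i - X 0‖ ≤ D := fun i hi =>
    Finset.le_sup' (fun i => ‖X i - X 0‖) hi
  have hSle : ∀ j ∈ Finset.Icc 1 (n - 1), ‖X j‖ ≤ S := fun j hj =>
    Finset.le_sup' (fun j => ‖X j‖) hj
  have hD0 : 0 ≤ D := le_trans (norm_nonneg _)
    (hDle n (Finset.mem_Icc.mpr ⟨by omega, le_rfl⟩))
  have hS0 : 0 ≤ S := le_trans (norm_nonneg _)
    (hSle 1 (Finset.mem_Icc.mpr ⟨le_rfl, by omega⟩))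
  have hM0 : (0:ℝ) ≤ ‖M‖ ^ 2 := by positivity
  -- identity for one = MᴴXnᴴXnM
  have hone : Mᴴ * ((X n)ᴴ * X n) * M = 1 := by
    have h1 : X n * M = 1 := Matrix.mul_nonsing_inv _ hdet
    have h2 : Mᴴ * (X n)ᴴ = 1 := by
      rw [← Matrix.conjTranspose_mul, h1, Matrix.conjTranspose_one]
    calc Mᴴ * ((X n)ᴴ * X n) * M = (Mᴴ * (X n)ᴴ) * (X n * M) := by
          simp [Matrix.mul_assoc]
      _ = 1 := by rw [h1, h2, Matrix.mul_one]
  have hterm0 : (X n)ᴴ⁻¹ * (X 0)ᴴ * X 0 * M - 1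
      = Mᴴ * ((X 0)ᴴ * X 0 - (X n)ᴴ * X n) * M := by
    rw [hconj, ← hone]
    simp [mul_sub, sub_mul, Matrix.mul_assoc]
  have htermj : ∀ j, (X n)ᴴ⁻¹ * (X j)ᴴ * X j * M - (X n)ᴴ⁻¹ * (X 0)ᴴ * X 0 * M
      = Mᴴ * ((X j)ᴴ * X j - (X 0)ᴴ * X 0) * M := by
    intro j
    rw [hconj]
    simp [mul_sub, sub_mul, Matrix.mul_assoc]
  have hb0 : ‖(X n)ᴴ⁻¹ * (X 0)ᴴ * X 0 * M - 1‖ ≤ ‖M‖ ^ 2 * (D * (‖X n‖ + ‖X 0‖)) := by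
    rw [hterm0]
    calc ‖Mᴴ * ((X 0)ᴴ * X 0 - (X n)ᴴ * X n) * M‖
        ≤ ‖M‖ ^ 2 * ‖(X 0)ᴴ * X 0 - (X n)ᴴ * X n‖ := aux_sandwich _ _
      _ ≤ ‖M‖ ^ 2 * (‖X 0 - X n‖ * (‖X 0‖ + ‖X n‖)) := by
          gcongr; exact aux_conj_sq _ _
      _ ≤ ‖M‖ ^ 2 * (D * (‖X n‖ + ‖X 0‖)) := by
          apply mul_le_mul_of_nonneg_left _ hM0
          rw [norm_sub_rev]
          have h := hDle n (Finset.mem_Icc.mpr ⟨by omega, le_rfl⟩)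
          have h1 := norm_nonneg (X n - X 0)
          have h2 := norm_nonneg (X 0)
          have h3 := norm_nonneg (X n)
          nlinarith [mul_nonneg (sub_nonneg.mpr h) (add_nonneg h2 h3)]
  have hbj : ∀ j ∈ Finset.Ico 1 n,
      ‖s j • ((X n)ᴴ⁻¹ * (X j)ᴴ * X j * M - (X n)ᴴ⁻¹ * (X 0)ᴴ * X 0 * M)‖
        ≤ s j * (‖M‖ ^ 2 * (D * (S + ‖X 0‖))) := by
    intro j hj
    rw [Finset.mem_Ico] at hj
    rw [norm_smul, Real.norm_eq_abs, abs_of_nonneg (hs j (Finset.mem_Ico.mpr hj)), htermj]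
    have hjn : ‖X j - X 0‖ ≤ D := hDle j (Finset.mem_Icc.mpr ⟨hj.1, by omega⟩)
    have hjs : ‖X j‖ ≤ S := hSle j (Finset.mem_Icc.mpr ⟨hj.1, by omega⟩)
    have h1 : ‖Mᴴ * ((X j)ᴴ * X j - (X 0)ᴴ * X 0) * M‖ ≤ ‖M‖ ^ 2 * (D * (S + ‖X 0‖)) := by
      calc ‖Mᴴ * ((X j)ᴴ * X j - (X 0)ᴴ * X 0) * M‖
          ≤ ‖M‖ ^ 2 * ‖(X j)ᴴ * X j - (X 0)ᴴ * X 0‖ := aux_sandwich _ _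
        _ ≤ ‖M‖ ^ 2 * (‖X j - X 0‖ * (‖X j‖ + ‖X 0‖)) := by
            gcongr; exact aux_conj_sq _ _
        _ ≤ ‖M‖ ^ 2 * (D * (S + ‖X 0‖)) := by
            apply mul_le_mul_of_nonneg_left _ hM0
            exact mul_le_mul hjn (add_le_add hjs le_rfl) (by positivity) hD0
    exact mul_le_mul_of_nonneg_left h1 (hs j (Finset.mem_Ico.mpr hj))
  have hsum : ‖∑ j ∈ Finset.Ico 1 n, s j •
      ((X n)ᴴ⁻¹ * (X j)ᴴ * X j * M - (X n)ᴴ⁻¹ * (X 0)ᴴ * X 0 * M)‖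
        ≤ ‖M‖ ^ 2 * (D * (S + ‖X 0‖)) := by
    calc ‖∑ j ∈ Finset.Ico 1 n, s j •
        ((X n)ᴴ⁻¹ * (X j)ᴴ * X j * M - (X n)ᴴ⁻¹ * (X 0)ᴴ * X 0 * M)‖
        ≤ ∑ j ∈ Finset.Ico 1 n, s j * (‖M‖ ^ 2 * (D * (S + ‖X 0‖))) :=
          norm_sum_le_of_le _ hbj
      _ = (∑ j ∈ Finset.Ico 1 n, s j) * (‖M‖ ^ 2 * (D * (S + ‖X 0‖))) := by
          rw [← Finset.sum_mul]
      _ ≤ 1 * (‖M‖ ^ 2 * (D * (S + ‖X 0‖))) := by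
          apply mul_le_mul_of_nonneg_right hssum
          have := norm_nonneg (X 0)
          positivity
      _ = ‖M‖ ^ 2 * (D * (S + ‖X 0‖)) := one_mul _
  rw [hA]
  calc ‖((X n)ᴴ⁻¹ * (X 0)ᴴ * X 0 * M - 1) + ∑ j ∈ Finset.Ico 1 n, s j •
        ((X n)ᴴ⁻¹ * (X j)ᴴ * X j * M - (X n)ᴴ⁻¹ * (X 0)ᴴ * X 0 * M)‖
      ≤ ‖(X n)ᴴ⁻¹ * (X 0)ᴴ * X 0 * M - 1‖ + ‖∑ j ∈ Finset.Ico 1 n, s j •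
        ((X n)ᴴ⁻¹ * (X j)ᴴ * X j * M - (X n)ᴴ⁻¹ * (X 0)ᴴ * X 0 * M)‖ := norm_add_le _ _
    _ ≤ ‖M‖ ^ 2 * (D * (‖X n‖ + ‖X 0‖)) + ‖M‖ ^ 2 * (D * (S + ‖X 0‖)) :=
        add_le_add hb0 hsum
    _ = ‖M‖ ^ 2 * D * (‖X n‖ + S + 2 * ‖X 0‖) := by ring
end

section
/- Let X_0, X_1, …, X_n be invertible N×N complex matrices, let s_1, …, s_{n−1} be real numbers with s_j ≥ 0 and Σ_j s_j ≤ 1, and let A = ((X_n*)⁻¹X_0*X_0X_n⁻¹ − I) + Σ_{j=1}^{n−1} s_j ((X_n*)⁻¹X_j*X_jX_n⁻¹ − (X_n*)⁻¹X_0*X_0X_n⁻¹). Set d = max_{0 ≤ i,j ≤ n} ‖X_i − X_j‖, M = max_{0 ≤ i ≤ n} ‖X_i‖ and m = max_{0 ≤ i ≤ n} ‖X_i⁻¹‖. Then ‖A‖ ≤ 4 d M m², where ‖·‖ is the spectral norm. -/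
open Matrix
open scoped Matrix.Norms.L2Operator

set_option maxHeartbeats 2000000 in
/-- For invertible complex matrices `X₀, …, Xₙ` and reals `s₁, …, s_{n-1}` with
`sⱼ ≥ 0`, `∑ sⱼ ≤ 1`, the associated matrix `A` satisfies `‖A‖ ≤ 4dMm²` with
`d = max ‖Xᵢ - Xⱼ‖`, `M = max ‖Xᵢ‖`, `m = max ‖Xᵢ⁻¹‖` (spectral norm). -/
theorem norm_A_le_four_d_M_m_sq
    (N n : ℕ) (hn : 1 ≤ n) (X : ℕ → Matrix (Fin N) (Fin N) ℂ)
    (hX : ∀ i ≤ n, IsUnit (X i).det)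
    (s : ℕ → ℝ) (hs : ∀ j ∈ Finset.Ico 1 n, 0 ≤ s j)
    (hssum : ∑ j ∈ Finset.Ico 1 n, s j ≤ 1)
    (A : Matrix (Fin N) (Fin N) ℂ)
    (hA : A = ((X n)ᴴ⁻¹ * (X 0)ᴴ * X 0 * (X n)⁻¹ - 1) +
      ∑ j ∈ Finset.Ico 1 n, s j •
        ((X n)ᴴ⁻¹ * (X j)ᴴ * X j * (X n)⁻¹ - (X n)ᴴ⁻¹ * (X 0)ᴴ * X 0 * (X n)⁻¹))
    (d M m : ℝ)
    (hd : d = ((Finset.Icc 0 n) ×ˢ (Finset.Icc 0 n)).sup'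
      (Finset.Nonempty.product (Finset.nonempty_Icc.mpr (Nat.zero_le n))
        (Finset.nonempty_Icc.mpr (Nat.zero_le n)))
      (fun p => ‖X p.1 - X p.2‖))
    (hM : M = (Finset.Icc 0 n).sup' (Finset.nonempty_Icc.mpr (Nat.zero_le n))
      (fun i => ‖X i‖))
    (hm : m = (Finset.Icc 0 n).sup' (Finset.nonempty_Icc.mpr (Nat.zero_le n))
      (fun i => ‖(X i)⁻¹‖)) :
    ‖A‖ ≤ 4 * d * M * m ^ 2 := by
  -- bounds from the sup's
  have hdle : ∀ i ≤ n, ∀ k ≤ n, ‖X i - X k‖ ≤ d := by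
    intro i hi k hk
    rw [hd]
    have := Finset.le_sup' (s := (Finset.Icc 0 n) ×ˢ (Finset.Icc 0 n))
      (f := fun p => ‖X p.1 - X p.2‖) (b := (i, k))
      (Finset.mk_mem_product (Finset.mem_Icc.mpr ⟨Nat.zero_le _, hi⟩)
        (Finset.mem_Icc.mpr ⟨Nat.zero_le _, hk⟩))
    exact this
  have hMle : ∀ i ≤ n, ‖X i‖ ≤ M := by
    intro i hi
    rw [hM]
    have := Finset.le_sup' (f := fun i => ‖X i‖) (b := i)
      (Finset.mem_Icc.mpr ⟨Nat.zero_le _, hi⟩)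
    exact this
  have hmle : ∀ i ≤ n, ‖(X i)⁻¹‖ ≤ m := by
    intro i hi
    rw [hm]
    have := Finset.le_sup' (f := fun i => ‖(X i)⁻¹‖) (b := i)
      (Finset.mem_Icc.mpr ⟨Nat.zero_le _, hi⟩)
    exact this
  have hd0 : 0 ≤ d := le_trans (norm_nonneg _) (hdle 0 (Nat.zero_le _) 0 (Nat.zero_le _))
  have hM0 : 0 ≤ M := le_trans (norm_nonneg _) (hMle 0 (Nat.zero_le _))
  have hm0 : 0 ≤ m := le_trans (norm_nonneg _) (hmle 0 (Nat.zero_le _))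
  have hnormH : ‖(X n)ᴴ⁻¹‖ ≤ m := by
    rw [← Matrix.conjTranspose_nonsing_inv, Matrix.l2_opNorm_conjTranspose]
    exact hmle n le_rfl
  -- key norm estimate
  have key : ∀ i ≤ n, ∀ k ≤ n,
      ‖(X n)ᴴ⁻¹ * ((X i)ᴴ * X i - (X k)ᴴ * X k) * (X n)⁻¹‖ ≤ 2 * d * M * m ^ 2 := by
    intro i hi k hk
    have hsplit : (X i)ᴴ * X i - (X k)ᴴ * X k
        = (X i)ᴴ * (X i - X k) + (X i - X k)ᴴ * X k := by
      rw [Matrix.conjTranspose_sub]; noncomm_ring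
    have hmid : ‖(X i)ᴴ * X i - (X k)ᴴ * X k‖ ≤ 2 * d * M := by
      rw [hsplit]
      calc ‖(X i)ᴴ * (X i - X k) + (X i - X k)ᴴ * X k‖
          ≤ ‖(X i)ᴴ * (X i - X k)‖ + ‖(X i - X k)ᴴ * X k‖ := norm_add_le _ _
        _ ≤ ‖(X i)ᴴ‖ * ‖X i - X k‖ + ‖(X i - X k)ᴴ‖ * ‖X k‖ :=
            add_le_add (Matrix.l2_opNorm_mul _ _) (Matrix.l2_opNorm_mul _ _)
        _ ≤ M * d + d * M := by
            rw [Matrix.l2_opNorm_conjTranspose, Matrix.l2_opNorm_conjTranspose]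
            exact add_le_add (mul_le_mul (hMle i hi) (hdle i hi k hk) (norm_nonneg _) hM0)
              (mul_le_mul (hdle i hi k hk) (hMle k hk) (norm_nonneg _) hd0)
        _ = 2 * d * M := by ring
    calc ‖(X n)ᴴ⁻¹ * ((X i)ᴴ * X i - (X k)ᴴ * X k) * (X n)⁻¹‖
        ≤ ‖(X n)ᴴ⁻¹ * ((X i)ᴴ * X i - (X k)ᴴ * X k)‖ * ‖(X n)⁻¹‖ :=
          Matrix.l2_opNorm_mul _ _
      _ ≤ ‖(X n)ᴴ⁻¹‖ * ‖(X i)ᴴ * X i - (X k)ᴴ * X k‖ * ‖(X n)⁻¹‖ :=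
          mul_le_mul_of_nonneg_right (Matrix.l2_opNorm_mul _ _) (norm_nonneg _)
      _ ≤ m * (2 * d * M) * m :=
          mul_le_mul (mul_le_mul hnormH hmid (norm_nonneg _) hm0)
            (hmle n le_rfl) (norm_nonneg _)
            (mul_nonneg hm0 (mul_nonneg (mul_nonneg (by norm_num) hd0) hM0))
      _ = 2 * d * M * m ^ 2 := by ring
  -- algebraic identities
  have hXn := hX n le_rfl
  have hid1 : (X n)ᴴ⁻¹ * (X 0)ᴴ * X 0 * (X n)⁻¹ - 1
      = (X n)ᴴ⁻¹ * ((X 0)ᴴ * X 0 - (X n)ᴴ * X n) * (X n)⁻¹ := by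
    have h1 : (X n)ᴴ⁻¹ * (X n)ᴴ = 1 :=
      Matrix.nonsing_inv_mul _ (by rwa [Matrix.det_conjTranspose, isUnit_star])
    have h2 : X n * (X n)⁻¹ = 1 := Matrix.mul_nonsing_inv _ hXn
    have : (X n)ᴴ⁻¹ * ((X n)ᴴ * X n) * (X n)⁻¹ = 1 := by
      rw [← Matrix.mul_assoc, h1, Matrix.one_mul, h2]
    rw [Matrix.mul_sub, Matrix.sub_mul, this]
    noncomm_ring
  have hid2 : ∀ j, (X n)ᴴ⁻¹ * (X j)ᴴ * X j * (X n)⁻¹ - (X n)ᴴ⁻¹ * (X 0)ᴴ * X 0 * (X n)⁻¹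
      = (X n)ᴴ⁻¹ * ((X j)ᴴ * X j - (X 0)ᴴ * X 0) * (X n)⁻¹ := by
    intro j; noncomm_ring
  -- put it together
  rw [hA, hid1]
  calc ‖(X n)ᴴ⁻¹ * ((X 0)ᴴ * X 0 - (X n)ᴴ * X n) * (X n)⁻¹ +
        ∑ j ∈ Finset.Ico 1 n, s j •
          ((X n)ᴴ⁻¹ * (X j)ᴴ * X j * (X n)⁻¹ - (X n)ᴴ⁻¹ * (X 0)ᴴ * X 0 * (X n)⁻¹)‖
      ≤ ‖(X n)ᴴ⁻¹ * ((X 0)ᴴ * X 0 - (X n)ᴴ * X n) * (X n)⁻¹‖ +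
        ∑ j ∈ Finset.Ico 1 n, ‖s j •
          ((X n)ᴴ⁻¹ * (X j)ᴴ * X j * (X n)⁻¹ - (X n)ᴴ⁻¹ * (X 0)ᴴ * X 0 * (X n)⁻¹)‖ :=
        le_trans (norm_add_le _ _)
          (add_le_add_right (norm_sum_le _ _) _)
    _ ≤ 2 * d * M * m ^ 2 + ∑ j ∈ Finset.Ico 1 n, s j * (2 * d * M * m ^ 2) := by
        refine add_le_add (key 0 (Nat.zero_le _) n le_rfl) (Finset.sum_le_sum ?_)
        intro j hj
        rw [hid2 j, norm_smul, Real.norm_eq_abs, abs_of_nonneg (hs j hj)]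
        have hjn : j ≤ n := le_of_lt (Finset.mem_Ico.mp hj).2
        exact mul_le_mul_of_nonneg_left (key j hjn 0 (Nat.zero_le _)) (hs j hj)
    _ = 2 * d * M * m ^ 2 + (∑ j ∈ Finset.Ico 1 n, s j) * (2 * d * M * m ^ 2) := by
        rw [Finset.sum_mul]
    _ ≤ 2 * d * M * m ^ 2 + 1 * (2 * d * M * m ^ 2) := by
        have hc : (0:ℝ) ≤ 2 * d * M * m ^ 2 :=
          mul_nonneg (mul_nonneg (by linarith) hM0) (by positivity)
        exact add_le_add_right (mul_le_mul_of_nonneg_right hssum hc) _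
    _ = 4 * d * M * m ^ 2 := by ring
end

section
/- Let X_0, …, X_n be positive definite hermitian N×N complex matrices, and set d = max_{i,j} ‖X_i − X_j‖, M = max_i ‖X_i‖, m = max_i ‖X_i⁻¹‖. Let k ≥ 0 and let X̃_0, …, X̃_n be positive definite hermitian matrices lying in the convex hull of {X_0, …, X_n} and satisfying ‖X̃_i − X̃_j‖ ≤ (n/(n+1))^k · d for all i, j (as holds for the vertices of any simplex of the k-th iterated barycentric subdivision of Δ[X_0,…,X_n]). Let s_1, …, s_{n−1} be reals with s_j ≥ 0 and Σ_j s_j ≤ 1, and let Ã = ((X̃_n*)⁻¹X̃_0*X̃_0X̃_n⁻¹ − I) + Σ_{j=1}^{n−1} s_j ((X̃_n*)⁻¹X̃_j*X̃_jX̃_n⁻¹ − (X̃_n*)⁻¹X̃_0*X̃_0X̃_n⁻¹). Then ‖Ã‖ ≤ (n/(n+1))^k · 4 d M m², where ‖·‖ is the spectral norm. -/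
open Matrix
open scoped Matrix.Norms.L2Operator ComplexOrder

set_option maxHeartbeats 1000000

section Aux
variable {N : ℕ}

lemma herm_symm {A : Matrix (Fin N) (Fin N) ℂ} (hA : A.IsHermitian) (u v : Fin N → ℂ) :
    star u ⬝ᵥ A *ᵥ v = star (star v ⬝ᵥ A *ᵥ u) := by
  rw [star_dotProduct]
  congr 1
  rw [star_mulVec, hA.eq, dotProduct_mulVec]

lemma norm_sq_eq_re (y : Fin N → ℂ) :
    ‖(WithLp.equiv 2 (Fin N → ℂ)).symm y‖ ^ 2 = Complex.re (star y ⬝ᵥ y) := by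
  rw [← inner_self_eq_norm_sq (𝕜 := ℂ) ((WithLp.equiv 2 (Fin N → ℂ)).symm y),
    EuclideanSpace.inner_eq_star_dotProduct]
  rw [dotProduct_comm]; rfl

lemma re_dot_le (u v : Fin N → ℂ) :
    Complex.re (star u ⬝ᵥ v) ≤
      ‖(WithLp.equiv 2 (Fin N → ℂ)).symm u‖ * ‖(WithLp.equiv 2 (Fin N → ℂ)).symm v‖ := by
  have h1 : Complex.re (star u ⬝ᵥ v) = RCLike.re (inner (𝕜 := ℂ)
      ((WithLp.equiv 2 (Fin N → ℂ)).symm u) ((WithLp.equiv 2 (Fin N → ℂ)).symm v)) := by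
    rw [EuclideanSpace.inner_eq_star_dotProduct, dotProduct_comm]; rfl
  rw [h1]
  exact (RCLike.re_le_norm _).trans (norm_inner_le_norm _ _)

lemma mulVec_norm_le (A : Matrix (Fin N) (Fin N) ℂ) (x : Fin N → ℂ) :
    ‖(WithLp.equiv 2 (Fin N → ℂ)).symm (A *ᵥ x)‖ ≤
      ‖A‖ * ‖(WithLp.equiv 2 (Fin N → ℂ)).symm x‖ := by
  simpa using A.l2_opNorm_mulVec ((WithLp.equiv 2 (Fin N → ℂ)).symm x)

lemma opNorm_le_of_mulVec {A : Matrix (Fin N) (Fin N) ℂ} {C : ℝ} (hC : 0 ≤ C)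
    (h : ∀ x : Fin N → ℂ, ‖(WithLp.equiv 2 (Fin N → ℂ)).symm (A *ᵥ x)‖ ≤
      C * ‖(WithLp.equiv 2 (Fin N → ℂ)).symm x‖) : ‖A‖ ≤ C := by
  rw [Matrix.l2_opNorm_def]
  refine ContinuousLinearMap.opNorm_le_bound _ hC fun x => ?_
  exact h (WithLp.equiv 2 (Fin N → ℂ) x)

/-- quadratic form lower bound for a PD matrix -/
lemma quad_lower {A : Matrix (Fin N) (Fin N) ℂ} (hA : A.PosDef) (y : Fin N → ℂ) :
    ‖(WithLp.equiv 2 (Fin N → ℂ)).symm y‖ ^ 2 ≤ ‖A⁻¹‖ * Complex.re (star y ⬝ᵥ A *ᵥ y) := by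
  by_cases hy : y = 0
  · simp [hy, norm_sq_eq_re]
  · have hN : Nonempty (Fin N) := by
      by_contra h
      exact hy (funext fun i => absurd ⟨i⟩ h)
    have hone : (1 : Matrix (Fin N) (Fin N) ℂ) ≠ 0 := by
      intro h
      obtain ⟨i⟩ := hN
      have := congrFun (congrFun h i) i
      simp [Matrix.one_apply] at this
    have hinv_ne : A⁻¹ ≠ 0 := by
      intro h
      apply hone
      rw [← Matrix.mul_nonsing_inv A (Matrix.isUnit_iff_isUnit_det A |>.mp hA.isUnit), h, mul_zero]
    have hmA : 0 < ‖A⁻¹‖ := norm_pos_iff.mpr hinv_ne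
    set z : Fin N → ℂ := A⁻¹ *ᵥ y with hz
    have hAz : A *ᵥ z = y := by
      rw [hz, Matrix.mulVec_mulVec, Matrix.mul_nonsing_inv A
        (Matrix.isUnit_iff_isUnit_det A |>.mp hA.isUnit), Matrix.one_mulVec]
    set t : ℝ := 1 / ‖A⁻¹‖ with ht
    have h0 : 0 ≤ Complex.re (star (y - (t : ℂ) • z) ⬝ᵥ A *ᵥ (y - (t : ℂ) • z)) :=
      hA.posSemidef.re_dotProduct_nonneg _
    have hexp : star (y - (t : ℂ) • z) ⬝ᵥ A *ᵥ (y - (t : ℂ) • z) =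
        (star y ⬝ᵥ A *ᵥ y) - (t : ℂ) * (star y ⬝ᵥ A *ᵥ z) - (t : ℂ) * (star z ⬝ᵥ A *ᵥ y)
          + (t : ℂ) * (t : ℂ) * (star z ⬝ᵥ A *ᵥ z) := by
      simp only [star_sub, star_smul, Complex.star_def, Complex.conj_ofReal,
        Matrix.mulVec_sub, Matrix.mulVec_smul, sub_dotProduct, dotProduct_sub,
        smul_dotProduct, dotProduct_smul, smul_eq_mul]
      ring
    have hyz : star y ⬝ᵥ A *ᵥ z = star y ⬝ᵥ y := by rw [hAz]
    have hzz : star z ⬝ᵥ A *ᵥ z = star z ⬝ᵥ y := by rw [hAz]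
    have hzy : Complex.re (star z ⬝ᵥ A *ᵥ y) = Complex.re (star y ⬝ᵥ y) := by
      rw [herm_symm hA.isHermitian z y, hyz, Complex.star_def, Complex.conj_re]
    set nsq : ℝ := Complex.re (star y ⬝ᵥ y) with hnsq
    have hnsq_eq : ‖(WithLp.equiv 2 (Fin N → ℂ)).symm y‖ ^ 2 = nsq := norm_sq_eq_re y
    have hre : 0 ≤ Complex.re (star y ⬝ᵥ A *ᵥ y) - t * nsq - t * nsq
        + t * t * Complex.re (star z ⬝ᵥ y) := by
      have := h0
      rw [hexp] at this
      simpa [Complex.add_re, Complex.sub_re, Complex.mul_re, Complex.ofReal_re,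
        Complex.ofReal_im, hyz, hzz, hzy, hnsq] using this
    have hzbound : Complex.re (star z ⬝ᵥ y) ≤ ‖A⁻¹‖ * nsq := by
      calc Complex.re (star z ⬝ᵥ y) ≤
          ‖(WithLp.equiv 2 (Fin N → ℂ)).symm z‖ * ‖(WithLp.equiv 2 (Fin N → ℂ)).symm y‖ :=
            re_dot_le z y
        _ ≤ (‖A⁻¹‖ * ‖(WithLp.equiv 2 (Fin N → ℂ)).symm y‖) *
            ‖(WithLp.equiv 2 (Fin N → ℂ)).symm y‖ :=
            mul_le_mul_of_nonneg_right (mulVec_norm_le _ _) (norm_nonneg _)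
        _ = ‖A⁻¹‖ * nsq := by rw [mul_assoc, ← sq, hnsq_eq]
    rw [hnsq_eq]
    set mA : ℝ := ‖A⁻¹‖ with hmAdef
    have h1 : (1 / mA) * (1 / mA) * Complex.re (star z ⬝ᵥ y) ≤
        (1 / mA) * (1 / mA) * (mA * nsq) := by
      apply mul_le_mul_of_nonneg_left hzbound
      positivity
    have h2 : (1 / mA) * (1 / mA) * (mA * nsq) = (1 / mA) * nsq := by
      field_simp
    have h4 : nsq / mA ≤ Complex.re (star y ⬝ᵥ A *ᵥ y) := by
      have e : nsq / mA = 1 / mA * nsq := by ring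
      linarith [hre, h1, h2]
    calc nsq = mA * (nsq / mA) := by field_simp
      _ ≤ mA * Complex.re (star y ⬝ᵥ A *ᵥ y) := mul_le_mul_of_nonneg_left h4 hmA.le

/-- from a uniform quadratic lower bound, a bound on the norm of the inverse -/
lemma inv_norm_le {A : Matrix (Fin N) (Fin N) ℂ} (hA : A.PosDef) {m : ℝ} (hm : 0 < m)
    (h : ∀ x : Fin N → ℂ, ‖(WithLp.equiv 2 (Fin N → ℂ)).symm x‖ ^ 2 ≤
      m * Complex.re (star x ⬝ᵥ A *ᵥ x)) : ‖A⁻¹‖ ≤ m := by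
  apply opNorm_le_of_mulVec hm.le
  intro x
  set y : Fin N → ℂ := A⁻¹ *ᵥ x with hy
  have hAy : A *ᵥ y = x := by
    rw [hy, Matrix.mulVec_mulVec, Matrix.mul_nonsing_inv A
      (Matrix.isUnit_iff_isUnit_det A |>.mp hA.isUnit), Matrix.one_mulVec]
  have h1 : ‖(WithLp.equiv 2 (Fin N → ℂ)).symm y‖ ^ 2 ≤
      m * (‖(WithLp.equiv 2 (Fin N → ℂ)).symm y‖ * ‖(WithLp.equiv 2 (Fin N → ℂ)).symm x‖) := by
    calc ‖(WithLp.equiv 2 (Fin N → ℂ)).symm y‖ ^ 2 ≤ m * Complex.re (star y ⬝ᵥ A *ᵥ y) := h y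
      _ = m * Complex.re (star y ⬝ᵥ x) := by rw [hAy]
      _ ≤ m * (‖(WithLp.equiv 2 (Fin N → ℂ)).symm y‖ * ‖(WithLp.equiv 2 (Fin N → ℂ)).symm x‖) :=
          mul_le_mul_of_nonneg_left (re_dot_le y x) hm.le
  rcases (norm_nonneg ((WithLp.equiv 2 (Fin N → ℂ)).symm y)).eq_or_lt with h0 | h0
  · rw [← h0]
    positivity
  · have h2 : ‖(WithLp.equiv 2 (Fin N → ℂ)).symm y‖ * ‖(WithLp.equiv 2 (Fin N → ℂ)).symm y‖ ≤
        ‖(WithLp.equiv 2 (Fin N → ℂ)).symm y‖ * (m * ‖(WithLp.equiv 2 (Fin N → ℂ)).symm x‖) := by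
      calc ‖(WithLp.equiv 2 (Fin N → ℂ)).symm y‖ * ‖(WithLp.equiv 2 (Fin N → ℂ)).symm y‖
          = ‖(WithLp.equiv 2 (Fin N → ℂ)).symm y‖ ^ 2 := (sq _).symm
        _ ≤ m * (‖(WithLp.equiv 2 (Fin N → ℂ)).symm y‖ * ‖(WithLp.equiv 2 (Fin N → ℂ)).symm x‖) :=
            h1
        _ = ‖(WithLp.equiv 2 (Fin N → ℂ)).symm y‖ * (m * ‖(WithLp.equiv 2 (Fin N → ℂ)).symm x‖) :=
            by ring
    exact le_of_mul_le_mul_left h2 h0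

end Aux

/-- Subdivision bound: if `X̃₀, …, X̃ₙ` are positive definite hermitian matrices in the
convex hull of positive definite hermitian matrices `X₀, …, Xₙ`, with pairwise distances
at most `(n/(n+1))^k · d` where `d = max ‖Xᵢ - Xⱼ‖`, then the associated matrix `Ã`
satisfies `‖Ã‖ ≤ (n/(n+1))^k · 4dMm²`, where `M = max ‖Xᵢ‖`, `m = max ‖Xᵢ⁻¹‖`
(spectral norm). -/
theorem norm_A_subdivision_bound
    (N n k : ℕ) (hn : 1 ≤ n)
    (X Xt : ℕ → Matrix (Fin N) (Fin N) ℂ)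
    (hX : ∀ i ≤ n, (X i).PosDef)
    (hXt : ∀ i ≤ n, (Xt i).PosDef)
    (hhull : ∀ i ≤ n, Xt i ∈ convexHull ℝ (X '' Set.Iic n))
    (d M m : ℝ)
    (hd : d = ((Finset.Icc 0 n) ×ˢ (Finset.Icc 0 n)).sup'
      (Finset.Nonempty.product (Finset.nonempty_Icc.mpr (Nat.zero_le n))
        (Finset.nonempty_Icc.mpr (Nat.zero_le n)))
      (fun p => ‖X p.1 - X p.2‖))
    (hM : M = (Finset.Icc 0 n).sup' (Finset.nonempty_Icc.mpr (Nat.zero_le n))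
      (fun i => ‖X i‖))
    (hm : m = (Finset.Icc 0 n).sup' (Finset.nonempty_Icc.mpr (Nat.zero_le n))
      (fun i => ‖(X i)⁻¹‖))
    (hdiam : ∀ i ≤ n, ∀ j ≤ n, ‖Xt i - Xt j‖ ≤ ((n : ℝ) / (n + 1)) ^ k * d)
    (s : ℕ → ℝ) (hs : ∀ j ∈ Finset.Ico 1 n, 0 ≤ s j)
    (hssum : ∑ j ∈ Finset.Ico 1 n, s j ≤ 1)
    (At : Matrix (Fin N) (Fin N) ℂ)
    (hAt : At = ((Xt n)ᴴ⁻¹ * (Xt 0)ᴴ * Xt 0 * (Xt n)⁻¹ - 1) +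
      ∑ j ∈ Finset.Ico 1 n, s j •
        ((Xt n)ᴴ⁻¹ * (Xt j)ᴴ * Xt j * (Xt n)⁻¹ -
          (Xt n)ᴴ⁻¹ * (Xt 0)ᴴ * Xt 0 * (Xt n)⁻¹)) :
    ‖At‖ ≤ ((n : ℝ) / (n + 1)) ^ k * (4 * d * M * m ^ 2) := by
  have hc0 : (0:ℝ) ≤ ((n : ℝ) / (n + 1)) ^ k := by positivity
  have hmem : ∀ i, i ≤ n → i ∈ Finset.Icc 0 n := fun i hi => by simp [hi]
  have hMi : ∀ i, i ≤ n → ‖X i‖ ≤ M := fun i hi =>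
    hM ▸ Finset.le_sup' (fun i => ‖X i‖) (hmem i hi)
  have hmi : ∀ i, i ≤ n → ‖(X i)⁻¹‖ ≤ m := fun i hi =>
    hm ▸ Finset.le_sup' (fun i => ‖(X i)⁻¹‖) (hmem i hi)
  have hd0 : 0 ≤ d := by
    have h00 : ((0:ℕ), (0:ℕ)) ∈ (Finset.Icc 0 n) ×ˢ (Finset.Icc 0 n) :=
      Finset.mem_product.mpr ⟨hmem 0 (Nat.zero_le n), hmem 0 (Nat.zero_le n)⟩
    have := hd ▸ Finset.le_sup' (fun p : ℕ × ℕ => ‖X p.1 - X p.2‖) h00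
    simpa using this
  have hM0 : 0 ≤ M := le_trans (norm_nonneg _) (hMi 0 (Nat.zero_le n))
  have hm0' : 0 ≤ m := le_trans (norm_nonneg _) (hmi 0 (Nat.zero_le n))
  have hrhs0 : 0 ≤ 4 * d * M * m ^ 2 :=
    mul_nonneg (mul_nonneg (mul_nonneg (by norm_num) hd0) hM0) (sq_nonneg m)
  rcases Nat.eq_zero_or_pos N with hN0 | hNpos
  · subst hN0
    have hAt0 : At = 0 := by ext i; exact i.elim0
    rw [hAt0, norm_zero]
    exact mul_nonneg hc0 hrhs0
  · -- N ≥ 1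
    have hone : (1 : Matrix (Fin N) (Fin N) ℂ) ≠ 0 := by
      intro h
      have := congrFun (congrFun h ⟨0, hNpos⟩) ⟨0, hNpos⟩
      simp [Matrix.one_apply] at this
    have hX0inv : (X 0)⁻¹ ≠ 0 := by
      intro h
      apply hone
      rw [← Matrix.mul_nonsing_inv (X 0)
        (Matrix.isUnit_iff_isUnit_det _ |>.mp (hX 0 (Nat.zero_le n)).isUnit), h, mul_zero]
    have hm0 : 0 < m := lt_of_lt_of_le (norm_pos_iff.mpr hX0inv) (hmi 0 (Nat.zero_le n))
    -- norm bound on Xt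
    have hball : X '' Set.Iic n ⊆ Metric.closedBall (0 : Matrix (Fin N) (Fin N) ℂ) M := by
      rintro _ ⟨j, hj, rfl⟩
      rw [Metric.mem_closedBall, dist_zero_right]
      exact hMi j hj
    have hXtM : ∀ i, i ≤ n → ‖Xt i‖ ≤ M := by
      intro i hi
      have := convexHull_min hball (convex_closedBall _ _) (hhull i hi)
      simpa [dist_zero_right] using Metric.mem_closedBall.mp this
    -- inverse norm bound on Xt n
    have hquad : ∀ x : Fin N → ℂ, ‖(WithLp.equiv 2 (Fin N → ℂ)).symm x‖ ^ 2 ≤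
        m * Complex.re (star x ⬝ᵥ (Xt n) *ᵥ x) := by
      intro x
      have hlin : IsLinearMap ℝ
          (fun B : Matrix (Fin N) (Fin N) ℂ => Complex.re (star x ⬝ᵥ B *ᵥ x)) := by
        constructor
        · intro B C
          rw [Matrix.add_mulVec, dotProduct_add, Complex.add_re]
        · intro r B
          rw [Matrix.smul_mulVec, dotProduct_smul]
          simp [Complex.real_smul, Complex.mul_re]
      have hconv : Convex ℝ {B : Matrix (Fin N) (Fin N) ℂ |
          ‖(WithLp.equiv 2 (Fin N → ℂ)).symm x‖ ^ 2 / m ≤ Complex.re (star x ⬝ᵥ B *ᵥ x)} :=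
        convex_halfSpace_ge hlin _
      have hsub : X '' Set.Iic n ⊆ {B : Matrix (Fin N) (Fin N) ℂ |
          ‖(WithLp.equiv 2 (Fin N → ℂ)).symm x‖ ^ 2 / m ≤ Complex.re (star x ⬝ᵥ B *ᵥ x)} := by
        rintro _ ⟨j, hj, rfl⟩
        have h1 := quad_lower (hX j hj) x
        have h2 : ‖(X j)⁻¹‖ * Complex.re (star x ⬝ᵥ X j *ᵥ x) ≤
            m * Complex.re (star x ⬝ᵥ X j *ᵥ x) :=
          mul_le_mul_of_nonneg_right (hmi j hj)
            ((hX j hj).posSemidef.re_dotProduct_nonneg x)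
        show _ / m ≤ _
        rw [div_le_iff₀ hm0]
        calc ‖(WithLp.equiv 2 (Fin N → ℂ)).symm x‖ ^ 2
            ≤ m * Complex.re (star x ⬝ᵥ X j *ᵥ x) := le_trans h1 h2
          _ = Complex.re (star x ⬝ᵥ X j *ᵥ x) * m := mul_comm _ _
      have hmemhull := convexHull_min hsub hconv (hhull n le_rfl)
      rw [Set.mem_setOf_eq, div_le_iff₀ hm0] at hmemhull
      linarith [hmemhull]
    have hXtninv : ‖(Xt n)⁻¹‖ ≤ m := inv_norm_le (hXt n le_rfl) hm0 hquad
    -- algebra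
    set T : ℕ → Matrix (Fin N) (Fin N) ℂ :=
      fun i => (Xt n)⁻¹ * Xt i * Xt i * (Xt n)⁻¹ with hT
    have hXtnU : IsUnit (Xt n).det :=
      Matrix.isUnit_iff_isUnit_det _ |>.mp (hXt n le_rfl).isUnit
    have key : ∀ i, i ≤ n → (Xt n)ᴴ⁻¹ * (Xt i)ᴴ * Xt i * (Xt n)⁻¹ = T i := by
      intro i hi
      show _ = (Xt n)⁻¹ * Xt i * Xt i * (Xt n)⁻¹
      rw [(hXt n le_rfl).isHermitian.eq, (hXt i hi).isHermitian.eq]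
    have hTn : T n = 1 := by
      show (Xt n)⁻¹ * Xt n * Xt n * (Xt n)⁻¹ = 1
      rw [Matrix.nonsing_inv_mul _ hXtnU, one_mul, Matrix.mul_nonsing_inv _ hXtnU]
    have hAt' : At = (T 0 - T n) + ∑ j ∈ Finset.Ico 1 n, s j • (T j - T 0) := by
      rw [hAt, key 0 (Nat.zero_le n), hTn]
      rw [add_right_inj]
      apply Finset.sum_congr rfl
      intro j hj
      rw [key j (le_of_lt (Finset.mem_Ico.mp hj).2)]
    set c : ℝ := ((n : ℝ) / (n + 1)) ^ k with hc
    have hcd0 : 0 ≤ c * d := mul_nonneg hc0 hd0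
    have hB0 : 0 ≤ 2 * M * (c * d) := mul_nonneg (mul_nonneg (by norm_num) hM0) hcd0
    have hTbound : ∀ i, i ≤ n → ∀ j, j ≤ n → ‖T i - T j‖ ≤ c * (2 * d * M * m ^ 2) := by
      intro i hi j hj
      have hdiff : T i - T j = (Xt n)⁻¹ * ((Xt i * Xt i - Xt j * Xt j) * (Xt n)⁻¹) := by
        show (Xt n)⁻¹ * Xt i * Xt i * (Xt n)⁻¹ - (Xt n)⁻¹ * Xt j * Xt j * (Xt n)⁻¹ = _
        noncomm_ring
      have h1 : ‖Xt i * Xt i - Xt j * Xt j‖ ≤ 2 * M * (c * d) := by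
        have e : Xt i * Xt i - Xt j * Xt j =
            Xt i * (Xt i - Xt j) + (Xt i - Xt j) * Xt j := by noncomm_ring
        rw [e]
        calc ‖Xt i * (Xt i - Xt j) + (Xt i - Xt j) * Xt j‖
            ≤ ‖Xt i * (Xt i - Xt j)‖ + ‖(Xt i - Xt j) * Xt j‖ := norm_add_le _ _
          _ ≤ ‖Xt i‖ * ‖Xt i - Xt j‖ + ‖Xt i - Xt j‖ * ‖Xt j‖ :=
              add_le_add (norm_mul_le _ _) (norm_mul_le _ _)
          _ ≤ M * (c * d) + (c * d) * M := by
              apply add_le_add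
              · exact mul_le_mul (hXtM i hi) (hdiam i hi j hj) (norm_nonneg _) hM0
              · exact mul_le_mul (hdiam i hi j hj) (hXtM j hj) (norm_nonneg _) hcd0
          _ = 2 * M * (c * d) := by ring
      rw [hdiff]
      calc ‖(Xt n)⁻¹ * ((Xt i * Xt i - Xt j * Xt j) * (Xt n)⁻¹)‖
          ≤ ‖(Xt n)⁻¹‖ * (‖Xt i * Xt i - Xt j * Xt j‖ * ‖(Xt n)⁻¹‖) :=
            le_trans (norm_mul_le _ _)
              (mul_le_mul_of_nonneg_left (norm_mul_le _ _) (norm_nonneg _))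
        _ ≤ m * ((2 * M * (c * d)) * m) := by
            apply mul_le_mul hXtninv
              (mul_le_mul h1 hXtninv (norm_nonneg _) hB0)
              (mul_nonneg (norm_nonneg _) (norm_nonneg _)) hm0.le
        _ = c * (2 * d * M * m ^ 2) := by ring
    have hK0 : 0 ≤ c * (2 * d * M * m ^ 2) :=
      mul_nonneg hc0 (mul_nonneg (mul_nonneg (mul_nonneg (by norm_num) hd0) hM0) (sq_nonneg m))
    have hsumbound : ‖∑ j ∈ Finset.Ico 1 n, s j • (T j - T 0)‖ ≤ c * (2 * d * M * m ^ 2) := by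
      calc ‖∑ j ∈ Finset.Ico 1 n, s j • (T j - T 0)‖
          ≤ ∑ j ∈ Finset.Ico 1 n, ‖s j • (T j - T 0)‖ := norm_sum_le _ _
        _ = ∑ j ∈ Finset.Ico 1 n, s j * ‖T j - T 0‖ := by
            apply Finset.sum_congr rfl
            intro j hj
            rw [norm_smul, Real.norm_eq_abs, abs_of_nonneg (hs j hj)]
        _ ≤ ∑ j ∈ Finset.Ico 1 n, s j * (c * (2 * d * M * m ^ 2)) := by
            apply Finset.sum_le_sum
            intro j hj
            exact mul_le_mul_of_nonneg_left
              (hTbound j (le_of_lt (Finset.mem_Ico.mp hj).2) 0 (Nat.zero_le n)) (hs j hj)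
        _ = (∑ j ∈ Finset.Ico 1 n, s j) * (c * (2 * d * M * m ^ 2)) :=
            (Finset.sum_mul _ _ _).symm
        _ ≤ 1 * (c * (2 * d * M * m ^ 2)) := mul_le_mul_of_nonneg_right hssum hK0
        _ = c * (2 * d * M * m ^ 2) := one_mul _
    calc ‖At‖ = ‖(T 0 - T n) + ∑ j ∈ Finset.Ico 1 n, s j • (T j - T 0)‖ := by rw [hAt']
      _ ≤ ‖T 0 - T n‖ + ‖∑ j ∈ Finset.Ico 1 n, s j • (T j - T 0)‖ := norm_add_le _ _
      _ ≤ c * (2 * d * M * m ^ 2) + c * (2 * d * M * m ^ 2) :=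
          add_le_add (hTbound 0 (Nat.zero_le n) n le_rfl) hsumbound
      _ = c * (4 * d * M * m ^ 2) := by ring
end

section
/- For every integer k ≥ 1, the sum over all tuples (i_1, …, i_k) ∈ {0,1,2}^k of the rational number a! · b! / (a + b + 2)!, where a = #{p : i_p = 1} and b = #{p : i_p = 2}, is at most 2^{k−1}. -/
open intervalIntegral in
/-- Beta integral with natural exponents. -/
lemma beta_nat (b a : ℕ) :
    ∫ x in (0:ℝ)..1, x ^ a * (1 - x) ^ b =
      (a.factorial * b.factorial : ℝ) / (a + b + 1).factorial := by
  induction b generalizing a with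
  | zero =>
      have ha : ((a:ℝ) + 1) ≠ 0 := by positivity
      have hf : (a.factorial : ℝ) ≠ 0 := by positivity
      simp only [pow_zero, mul_one, integral_pow, one_pow, Nat.add_zero,
        Nat.factorial_zero, Nat.factorial_succ]
      push_cast
      field_simp
      simp
  | succ b ih =>
      have hcont : ∀ (m n : ℕ), Continuous fun x : ℝ => x ^ m * (1 - x) ^ n := by
        intro m n; continuity
      have hsplit : (fun x : ℝ => x ^ a * (1 - x) ^ (b + 1)) =
          fun x : ℝ => x ^ a * (1 - x) ^ b - x ^ (a + 1) * (1 - x) ^ b := by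
        funext x; ring
      rw [hsplit, intervalIntegral.integral_sub
        ((hcont a b).intervalIntegrable _ _) ((hcont (a+1) b).intervalIntegrable _ _),
        ih a, ih (a + 1)]
      have h1 : a + 1 + b + 1 = a + b + 1 + 1 := by omega
      have h2 : a + (b + 1) + 1 = a + b + 1 + 1 := by omega
      rw [h1, h2, Nat.factorial_succ (a + b + 1), Nat.factorial_succ a,
        Nat.factorial_succ b]
      have hab : ((a + b + 1).factorial : ℝ) ≠ 0 := by positivity
      have habs : ((a + b + 1 + 1 : ℕ) : ℝ) ≠ 0 := by positivity
      field_simp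
      push_cast
      ring

/-- Pointwise factorization identity. -/
lemma sum_pow_eq (k : ℕ) (x : ℝ) :
    ∑ i : Fin k → Fin 3,
      x ^ (Finset.univ.filter (fun p => i p = 1)).card *
        (1 - x) ^ (Finset.univ.filter (fun p => i p = 2)).card = 2 ^ k := by
  have hterm : ∀ i : Fin k → Fin 3,
      x ^ (Finset.univ.filter (fun p => i p = 1)).card *
        (1 - x) ^ (Finset.univ.filter (fun p => i p = 2)).card =
      ∏ p : Fin k, (if i p = 1 then x else if i p = 2 then 1 - x else 1) := by
    intro i
    have : ∀ p : Fin k, (if i p = 1 then x else if i p = 2 then 1 - x else 1) =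
        (if i p = 1 then x else 1) * (if i p = 2 then (1 - x) else 1) := by
      intro p
      generalize i p = j
      fin_cases j <;> simp [Fin.ext_iff]
    simp only [this, Finset.prod_mul_distrib, Finset.prod_ite, Finset.prod_const,
      Finset.prod_const_one, one_pow, mul_one]
  simp only [hterm]
  rw [← Fintype.prod_sum (fun (_ : Fin k) (j : Fin 3) =>
    (if j = 1 then x else if j = 2 then 1 - x else 1))]
  have : ∑ j : Fin 3, (if j = 1 then x else if j = 2 then 1 - x else 1) = 2 := by
    simp [Fin.sum_univ_three]; ring
  simp [this]

/-- Sum of `a!b!/(a+b+1)!` over all tuples equals `2^k` (over `ℝ`). -/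
lemma key_real (k : ℕ) :
    ∑ i : Fin k → Fin 3,
      (((Finset.univ.filter (fun p => i p = 1)).card.factorial *
        (Finset.univ.filter (fun p => i p = 2)).card.factorial : ℝ) /
        ((Finset.univ.filter (fun p => i p = 1)).card +
          (Finset.univ.filter (fun p => i p = 2)).card + 1).factorial) = 2 ^ k := by
  have h1 : ∑ i : Fin k → Fin 3,
      (((Finset.univ.filter (fun p => i p = 1)).card.factorial *
        (Finset.univ.filter (fun p => i p = 2)).card.factorial : ℝ) /
        ((Finset.univ.filter (fun p => i p = 1)).card +
          (Finset.univ.filter (fun p => i p = 2)).card + 1).factorial) =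
      ∑ i : Fin k → Fin 3, ∫ x in (0:ℝ)..1,
        x ^ (Finset.univ.filter (fun p => i p = 1)).card *
          (1 - x) ^ (Finset.univ.filter (fun p => i p = 2)).card := by
    refine Finset.sum_congr rfl fun i _ => ?_
    rw [beta_nat]
  rw [h1, ← intervalIntegral.integral_finset_sum]
  · have : (fun x : ℝ => ∑ i : Fin k → Fin 3,
        x ^ (Finset.univ.filter (fun p => i p = 1)).card *
          (1 - x) ^ (Finset.univ.filter (fun p => i p = 2)).card) =
        fun _ : ℝ => (2:ℝ) ^ k := by
      funext x; exact sum_pow_eq k x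
    rw [this]
    simp
  · intro i _
    exact (by continuity : Continuous fun x : ℝ =>
      x ^ (Finset.univ.filter (fun p => i p = 1)).card *
        (1 - x) ^ (Finset.univ.filter (fun p => i p = 2)).card).intervalIntegrable _ _

/-- Sum of `a!b!/(a+b+1)!` over all tuples equals `2^k` (over `ℚ`). -/
lemma key_rat (k : ℕ) :
    ∑ i : Fin k → Fin 3,
      (((Finset.univ.filter (fun p => i p = 1)).card.factorial *
        (Finset.univ.filter (fun p => i p = 2)).card.factorial : ℚ) /
        ((Finset.univ.filter (fun p => i p = 1)).card +
          (Finset.univ.filter (fun p => i p = 2)).card + 1).factorial) = 2 ^ k := by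
  have := key_real k
  exact_mod_cast (by push_cast; exact this :
    ((∑ i : Fin k → Fin 3,
      (((Finset.univ.filter (fun p => i p = 1)).card.factorial *
        (Finset.univ.filter (fun p => i p = 2)).card.factorial : ℚ) /
        ((Finset.univ.filter (fun p => i p = 1)).card +
          (Finset.univ.filter (fun p => i p = 2)).card + 1).factorial) : ℚ) : ℝ)
      = ((2 ^ k : ℚ) : ℝ))

/-- For `k ≥ 1`, the sum over all tuples `(i₁, …, i_k) ∈ {0,1,2}^k` of
`a! b! / (a+b+2)!`, where `a` is the number of entries equal to `1` and `b` the
number of entries equal to `2`, is at most `2^{k-1}`. -/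
theorem sum_factorial_coeffs_le
    (k : ℕ) (hk : 1 ≤ k) :
    ∑ i : Fin k → Fin 3,
      (((Finset.univ.filter (fun p => i p = 1)).card.factorial *
        (Finset.univ.filter (fun p => i p = 2)).card.factorial : ℚ) /
        ((Finset.univ.filter (fun p => i p = 1)).card +
          (Finset.univ.filter (fun p => i p = 2)).card + 2).factorial) ≤
      2 ^ (k - 1) := by
  have hle : ∑ i : Fin k → Fin 3,
      (((Finset.univ.filter (fun p => i p = 1)).card.factorial *
        (Finset.univ.filter (fun p => i p = 2)).card.factorial : ℚ) /
        ((Finset.univ.filter (fun p => i p = 1)).card +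
          (Finset.univ.filter (fun p => i p = 2)).card + 2).factorial) ≤
      ∑ i : Fin k → Fin 3, (1/2) *
      (((Finset.univ.filter (fun p => i p = 1)).card.factorial *
        (Finset.univ.filter (fun p => i p = 2)).card.factorial : ℚ) /
        ((Finset.univ.filter (fun p => i p = 1)).card +
          (Finset.univ.filter (fun p => i p = 2)).card + 1).factorial) := by
    refine Finset.sum_le_sum fun i _ => ?_
    set a := (Finset.univ.filter (fun p => i p = 1)).card
    set b := (Finset.univ.filter (fun p => i p = 2)).card
    have h2 : a + b + 2 = (a + b + 1) + 1 := by omega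
    rw [h2, Nat.factorial_succ]
    have hF : (0:ℚ) < ((a + b + 1).factorial : ℚ) := by positivity
    have hrw : (1/2 : ℚ) *
        ((a.factorial * b.factorial : ℚ) / ((a + b + 1).factorial : ℚ)) =
        (a.factorial * b.factorial : ℚ) / (2 * ((a + b + 1).factorial : ℚ)) := by
      ring
    rw [hrw]
    have hden : (2:ℚ) * ((a + b + 1).factorial : ℚ) ≤
        (((a + b + 1 + 1) * (a + b + 1).factorial : ℕ) : ℚ) := by
      push_cast
      have h2le : (2:ℚ) ≤ ((a + b + 1 + 1 : ℕ) : ℚ) := by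
        exact_mod_cast (by omega : 2 ≤ a + b + 1 + 1)
      push_cast at h2le
      nlinarith
    exact div_le_div_of_nonneg_left (by positivity) (by positivity) hden
  refine hle.trans ?_
  rw [← Finset.mul_sum, key_rat]
  have h2k : (2:ℚ) ^ k = 2 ^ (k - 1) * 2 := by
    rw [← pow_succ]; congr 1; omega
  exact le_of_eq (by rw [h2k]; ring)
end
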